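/- arXiv:2111.00255 — 2 statements merged into one kernel-verified Lean document; each statement's English description precedes it below -/
import Mathlib

section
/- In the EV travel model with full recharges at stations, strictly positive travel times, and nonnegative charging/waiting times, there exists an optimal (minimum total time) feasible walk from s to t in which no charging station is visited more than once. Consequently, duplicating charging-station vertices (setting S' = ∅) does not change the optimal value. -/
/-- Sum of arc weights over consecutive pairs of a walk. -/
def arcSum {V : Type*} (f : V → V → ℝ) (w : List V) : ℝ :=
  ((w.zip w.tail).map fun p => f p.1 p.2).sum

/-- Battery feasibility with full recharges at stations of `S`. -/
def Feasible {V : Type*} (c : V → V → ℝ) (S : V → Bool) (Q : ℝ) :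
    ℝ → List V → Prop
  | ε, i :: j :: rest =>
      0 ≤ ε - c i j ∧ Feasible c S Q (if S j then Q else ε - c i j) (j :: rest)
  | _, _ => True

/-- A feasible walk of the EV from `s` to `t`, starting fully charged. -/
def FeasWalk {V : Type*} (A : V → V → Prop) (c : V → V → ℝ) (S : V → Bool)
    (Q : ℝ) (s t : V) (w : List V) : Prop :=
  w.Chain' A ∧ w.head? = some s ∧ w.getLast? = some t ∧ Feasible c S Q Q w

section H
variable {V : Type*}

lemma arcSum_nil (f : V → V → ℝ) : arcSum f [] = 0 := rfl
lemma arcSum_single (f : V → V → ℝ) (x : V) : arcSum f [x] = 0 := rfl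
lemma arcSum_cons_cons (f : V → V → ℝ) (x y : V) (l : List V) :
    arcSum f (x :: y :: l) = f x y + arcSum f (y :: l) := rfl

lemma feas_nil (c : V → V → ℝ) (S : V → Bool) (Q ε : ℝ) : Feasible c S Q ε [] := trivial
lemma feas_single (c : V → V → ℝ) (S : V → Bool) (Q ε : ℝ) (x : V) :
    Feasible c S Q ε [x] := trivial
lemma feas_cons_cons (c : V → V → ℝ) (S : V → Bool) (Q ε : ℝ) (i j : V) (rest : List V) :
    Feasible c S Q ε (i :: j :: rest) ↔
      (0 ≤ ε - c i j ∧ Feasible c S Q (if S j then Q else ε - c i j) (j :: rest)) := Iff.rfl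

def batt {V : Type*} (c : V → V → ℝ) (S : V → Bool) (Q : ℝ) : ℝ → List V → ℝ
  | ε, i :: j :: rest => batt c S Q (if S j then Q else ε - c i j) (j :: rest)
  | ε, _ => ε

lemma batt_single (c : V → V → ℝ) (S : V → Bool) (Q ε : ℝ) (x : V) :
    batt c S Q ε [x] = ε := rfl

end H
section H2
variable {V : Type*}

lemma arcSum_split (f : V → V → ℝ) :
    ∀ (l1 : List V) (y : V) (l2 : List V),
      arcSum f (l1 ++ y :: l2) = arcSum f (l1 ++ [y]) + arcSum f (y :: l2)
  | [], y, l2 => by simp [arcSum_single]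
  | [x], y, l2 => by simp [arcSum_cons_cons, arcSum_single]
  | x :: x' :: l1, y, l2 => by
      have IH := arcSum_split f (x' :: l1) y l2
      simp only [List.cons_append] at *
      rw [arcSum_cons_cons, arcSum_cons_cons f x x', IH]
      ring

lemma chain'_pairs {R : V → V → Prop} :
    ∀ (l : List V), l.Chain' R → ∀ p ∈ l.zip l.tail, R p.1 p.2
  | [], _, p, hp => by simp at hp
  | [x], _, p, hp => by simp at hp
  | x :: y :: r, h, p, hp => by
      rcases List.isChain_cons_cons.mp h with ⟨hxy, h'⟩
      simp only [List.zip_cons_cons, List.tail_cons, List.mem_cons] at hp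
      rcases hp with rfl | hp
      · exact hxy
      · exact chain'_pairs (y :: r) h' p (by simpa using hp)

lemma arcSum_nonneg {A : V → V → Prop} {d : V → V → ℝ} (hd : ∀ i j, A i j → 0 < d i j)
    {l : List V} (hl : l.Chain' A) : 0 ≤ arcSum d l := by
  apply List.sum_nonneg
  intro x hx
  rcases List.mem_map.mp hx with ⟨p, hp, rfl⟩
  exact (hd _ _ (chain'_pairs l hl p hp)).le

lemma arcSum_pos {A : V → V → Prop} {d : V → V → ℝ} (hd : ∀ i j, A i j → 0 < d i j)
    (x y : V) (l : List V) (h : (x :: y :: l).Chain' A) : 0 < arcSum d (x :: y :: l) := by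
  rcases List.isChain_cons_cons.mp h with ⟨hxy, h'⟩
  have := arcSum_nonneg hd h'
  rw [arcSum_cons_cons]
  have := hd _ _ hxy
  linarith

lemma arcSum_ge {A : V → V → Prop} {d : V → V → ℝ} {δ : ℝ}
    (hδ : ∀ i j, A i j → δ ≤ d i j) :
    ∀ (l : List V), l.Chain' A → ((l.length - 1 : ℕ) : ℝ) * δ ≤ arcSum d l
  | [], _ => by simp [arcSum_nil]
  | [x], _ => by simp [arcSum_single]
  | x :: y :: r, h => by
      rcases List.isChain_cons_cons.mp h with ⟨hxy, h'⟩
      have IH := arcSum_ge hδ (y :: r) h'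
      have h1 := hδ _ _ hxy
      rw [arcSum_cons_cons]
      simp only [List.length_cons, Nat.add_sub_cancel] at *
      push_cast at *
      linarith

end H2
section H3
variable {V : Type*}

lemma feasible_append (c : V → V → ℝ) (S : V → Bool) (Q : ℝ) :
    ∀ (xs : List V) (ε : ℝ) (y : V) (ys : List V),
      Feasible c S Q ε (xs ++ y :: ys) ↔
        (Feasible c S Q ε (xs ++ [y]) ∧
          Feasible c S Q (batt c S Q ε (xs ++ [y])) (y :: ys))
  | [], ε, y, ys => by
      simp only [List.nil_append]
      rw [batt_single]
      exact ⟨fun h => ⟨trivial, h⟩, fun h => h.2⟩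
  | [x], ε, y, ys => by
      simp only [List.cons_append, List.nil_append]
      rw [feas_cons_cons, feas_cons_cons]
      constructor
      · rintro ⟨h1, h2⟩
        exact ⟨⟨h1, trivial⟩, h2⟩
      · rintro ⟨⟨h1, -⟩, h2⟩
        exact ⟨h1, h2⟩
  | x :: x' :: xs, ε, y, ys => by
      have IH := feasible_append c S Q (x' :: xs) (if S x' then Q else ε - c x x') y ys
      simp only [List.cons_append] at *
      rw [feas_cons_cons, feas_cons_cons, IH]
      exact ⟨fun ⟨h1, h2, h3⟩ => ⟨⟨h1, h2⟩, h3⟩, fun ⟨⟨h1, h2⟩, h3⟩ => ⟨h1, h2, h3⟩⟩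

lemma batt_station (c : V → V → ℝ) (S : V → Bool) (Q : ℝ) {v : V} (hv : S v = true) :
    ∀ (xs : List V) (ε : ℝ) (x : V), batt c S Q ε (x :: xs ++ [v]) = Q
  | [], ε, x => by simp [batt, hv]
  | x' :: xs, ε, x => by
      simp only [List.cons_append]
      rw [show batt c S Q ε (x :: x' :: (xs ++ [v]))
            = batt c S Q (if S x' then Q else ε - c x x') (x' :: (xs ++ [v])) from rfl]
      exact batt_station c S Q hv xs _ x'

end H3

section H4
variable {V : Type*}

lemma arcSum_pos' {A : V → V → Prop} {d : V → V → ℝ} (hd : ∀ i j, A i j → 0 < d i j)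
    (x : V) (l : List V) (hl : l ≠ []) (h : (x :: l).Chain' A) : 0 < arcSum d (x :: l) := by
  cases l with
  | nil => exact absurd rfl hl
  | cons y r => exact arcSum_pos hd x y r h

lemma splice {A : V → V → Prop} {c : V → V → ℝ} {S : V → Bool} {Q : ℝ} {s t v : V}
    (a b cc : List V) (hv : S v = true)
    (hw : FeasWalk A c S Q s t (a ++ v :: (b ++ v :: cc))) :
    FeasWalk A c S Q s t (a ++ v :: cc) := by
  obtain ⟨hch, hhd, hlast, hfeas⟩ := hw
  have h1 := List.isChain_append.mp hch
  have hch2 : (v :: (b ++ v :: cc) : List V).Chain' A := h1.2.1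
  have hchsuf : (v :: cc : List V).Chain' A :=
    hch2.suffix ⟨v :: b, by simp⟩
  refine ⟨?_, ?_, ?_, ?_⟩
  · refine List.isChain_append.mpr ⟨h1.1, hchsuf, ?_⟩
    intro x hx y hy
    simp only [List.head?_cons, Option.mem_def, Option.some.injEq] at hy
    subst hy
    exact h1.2.2 x hx v (by simp)
  · rw [← hhd]
    cases a <;> simp
  · rw [← hlast]
    rw [List.getLast?_append_cons a v cc, List.getLast?_append_cons a v (b ++ v :: cc)]
    rw [show (v :: (b ++ v :: cc) : List V) = (v :: b) ++ v :: cc by simp]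
    rw [List.getLast?_append_cons]
  · have hf := (feasible_append c S Q a Q v (b ++ v :: cc)).mp hfeas
    have hf2 := (feasible_append c S Q (v :: b)
        (batt c S Q Q (a ++ [v])) v cc).mp hf.2
    have hb2 : batt c S Q (batt c S Q Q (a ++ [v])) ((v :: b) ++ [v]) = Q := by
      exact batt_station c S Q hv b _ v
    have hfc : Feasible c S Q Q (v :: cc) := by
      have h := hf2.2
      rwa [hb2] at h
    refine (feasible_append c S Q a Q v cc).mpr ⟨hf.1, ?_⟩
    have hb : batt c S Q Q (a ++ [v]) = Q := by
      cases a with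
      | nil => rfl
      | cons x a' => exact batt_station c S Q hv a' Q x
    rw [hb]
    exact hfc

lemma splice_lt {A : V → V → Prop} {d : V → V → ℝ} (ct : V → ℝ)
    (hd : ∀ i j, A i j → 0 < d i j) (hct : ∀ u, 0 ≤ ct u)
    (a b cc : List V) (v : V)
    (hch : (a ++ v :: (b ++ v :: cc) : List V).Chain' A) :
    arcSum d (a ++ v :: cc) + ((a ++ v :: cc).map ct).sum
      < arcSum d (a ++ v :: (b ++ v :: cc)) + ((a ++ v :: (b ++ v :: cc)).map ct).sum := by
  have harc : arcSum d (a ++ v :: (b ++ v :: cc))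
      = arcSum d (a ++ [v]) + (arcSum d ((v :: b) ++ [v]) + arcSum d (v :: cc)) := by
    rw [arcSum_split d a v (b ++ v :: cc),
      show (v :: (b ++ v :: cc) : List V) = (v :: b) ++ v :: cc by simp,
      arcSum_split d (v :: b) v cc]
  have harc' : arcSum d (a ++ v :: cc) = arcSum d (a ++ [v]) + arcSum d (v :: cc) :=
    arcSum_split d a v cc
  have hch2 : ((v :: b) ++ [v] : List V).Chain' A := by
    have h1 := (List.isChain_append.mp hch).2.1
    have h2 : (v :: (b ++ v :: cc) : List V) = ((v :: b) ++ [v]) ++ cc := by simp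
    exact (h2 ▸ h1).prefix ⟨cc, rfl⟩
  have hpos : 0 < arcSum d ((v :: b) ++ [v]) := by
    rw [show ((v :: b) ++ [v] : List V) = v :: (b ++ [v]) by simp] at hch2 ⊢
    exact arcSum_pos' hd v (b ++ [v]) (by simp) hch2
  have hctb : 0 ≤ (b.map ct).sum :=
    List.sum_nonneg (by rintro x hx; rcases List.mem_map.mp hx with ⟨y, -, rfl⟩; exact hct y)
  have hctv := hct v
  simp only [List.map_append, List.sum_append, List.map_cons, List.sum_cons]
  linarith

end H4
lemma two_count_split {α : Type*} [DecidableEq α] {v : α} {l : List α}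
    (h : 2 ≤ l.count v) : ∃ a b cc, l = a ++ v :: (b ++ v :: cc) := by
  have hv : v ∈ l := List.count_pos_iff.mp (by omega)
  obtain ⟨p, r, rfl⟩ := List.append_of_mem hv
  rw [List.count_append, List.count_cons_self] at h
  have h1 : 1 ≤ p.count v + r.count v := by omega
  by_cases hr : v ∈ r
  · obtain ⟨b, cc, rfl⟩ := List.append_of_mem hr
    exact ⟨p, b, cc, rfl⟩
  · have hp : v ∈ p := by
      rcases Nat.le_iff_lt_or_eq.mp h1 with _ | _ <;>
      · have : 0 < p.count v := by
          have : r.count v = 0 := List.count_eq_zero_of_not_mem hr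
          omega
        exact List.count_pos_iff.mp this
    obtain ⟨p1, p2, rfl⟩ := List.append_of_mem hp
    exact ⟨p1, p2, r, by simp⟩

/-- With strictly positive travel times and nonnegative charging/waiting times
(vanishing off stations), there is an optimal feasible walk visiting each
charging station at most once; hence restricting to such walks does not change
the optimal value. -/
theorem stmt_4 {V : Type*} [Fintype V] [DecidableEq V] (A : V → V → Prop)
    (d c : V → V → ℝ) (S : V → Bool) (ct : V → ℝ) (Q : ℝ) (s t : V)
    (hd : ∀ i j, A i j → 0 < d i j) (hct : ∀ v, 0 ≤ ct v)
    (hct0 : ∀ v, S v = false → ct v = 0)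
    (hex : ∃ w, FeasWalk A c S Q s t w) :
    (∃ w, FeasWalk A c S Q s t w ∧
      (∀ w', FeasWalk A c S Q s t w' →
        arcSum d w + (w.map ct).sum ≤ arcSum d w' + (w'.map ct).sum) ∧
      (∀ v, S v = true → w.count v ≤ 1)) ∧
    sInf {r : ℝ | ∃ w, FeasWalk A c S Q s t w ∧
        r = arcSum d w + (w.map ct).sum}
      = sInf {r : ℝ | ∃ w, FeasWalk A c S Q s t w ∧
          (∀ v, S v = true → w.count v ≤ 1) ∧
          r = arcSum d w + (w.map ct).sum} := by
  classical
  obtain ⟨w0, hw0⟩ := hex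
  set F : List V → ℝ := fun w => arcSum d w + (w.map ct).sum with hF
  -- positive lower bound δ on arc times
  set T : Finset ℝ :=
    insert 1 ((Finset.univ.filter (fun p : V × V => A p.1 p.2)).image
      fun p => d p.1 p.2) with hT
  have hTne : T.Nonempty := ⟨1, Finset.mem_insert_self _ _⟩
  set δ := T.min' hTne with hδdef
  have hδpos : 0 < δ := by
    have hm : δ ∈ T := T.min'_mem hTne
    rcases Finset.mem_insert.mp hm with h | h
    · rw [h]; norm_num
    · rcases Finset.mem_image.mp h with ⟨p, hp, hpd⟩
      rw [← hpd]
      exact hd _ _ (Finset.mem_filter.mp hp).2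
  have hδle : ∀ i j, A i j → δ ≤ d i j := fun i j h =>
    Finset.min'_le _ _ (Finset.mem_insert_of_mem (Finset.mem_image.mpr
      ⟨(i, j), Finset.mem_filter.mpr ⟨Finset.mem_univ _, h⟩, rfl⟩))
  have hctsum : ∀ w : List V, 0 ≤ (w.map ct).sum := fun w =>
    List.sum_nonneg (by rintro x hx; rcases List.mem_map.mp hx with ⟨y, -, rfl⟩; exact hct y)
  -- finiteness of the sublevel set
  set N : ℕ := Nat.ceil (F w0 / δ) + 1 with hN
  set W : Set (List V) := {w | FeasWalk A c S Q s t w ∧ F w ≤ F w0} with hW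
  have hWfin : W.Finite := by
    apply (List.finite_length_le V N).subset
    rintro w ⟨hw, hle⟩
    have h1 : ((w.length - 1 : ℕ) : ℝ) * δ ≤ F w0 := by
      have := arcSum_ge hδle w hw.1
      have := hctsum w
      have : arcSum d w ≤ F w := by rw [hF]; simp; linarith
      linarith [arcSum_ge hδle w hw.1]
    have h2 : ((w.length - 1 : ℕ) : ℝ) ≤ F w0 / δ := (le_div_iff₀ hδpos).mpr h1
    have h3 : (w.length - 1 : ℕ) ≤ Nat.ceil (F w0 / δ) := by
      exact_mod_cast h2.trans (Nat.le_ceil _)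
    simp only [Set.mem_setOf_eq]
    omega
  obtain ⟨w, hwW, hmin⟩ := Set.exists_min_image W F hWfin ⟨w0, hw0, le_refl _⟩
  have hopt : ∀ w', FeasWalk A c S Q s t w' → F w ≤ F w' := by
    intro w' hw'
    by_cases h : F w' ≤ F w0
    · exact hmin w' ⟨hw', h⟩
    · have := hmin w0 ⟨hw0, le_refl _⟩
      push_neg at h
      linarith
  have hcount : ∀ v, S v = true → w.count v ≤ 1 := by
    intro v hv
    by_contra hc
    push_neg at hc
    obtain ⟨a, b, cc, heq⟩ := two_count_split (v := v) (l := w) (by omega)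
    have hwfeas : FeasWalk A c S Q s t (a ++ v :: (b ++ v :: cc)) := heq ▸ hwW.1
    have hfw' := splice a b cc hv hwfeas
    have hlt := splice_lt ct hd hct a b cc v hwfeas.1
    have hge := hopt _ hfw'
    rw [hF] at hge
    simp only at hge
    rw [heq] at hge
    linarith
  refine ⟨⟨w, hwW.1, fun w' hw' => hopt w' hw', hcount⟩, ?_⟩
  -- sInf equality
  have hlb1 : F w ∈ lowerBounds {r : ℝ | ∃ w', FeasWalk A c S Q s t w' ∧
      r = arcSum d w' + (w'.map ct).sum} := by
    rintro r ⟨w', hw', rfl⟩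
    exact hopt w' hw'
  have hlb2 : F w ∈ lowerBounds {r : ℝ | ∃ w', FeasWalk A c S Q s t w' ∧
      (∀ v, S v = true → w'.count v ≤ 1) ∧ r = arcSum d w' + (w'.map ct).sum} := by
    rintro r ⟨w', hw', -, rfl⟩
    exact hopt w' hw'
  have hmem1 : F w ∈ {r : ℝ | ∃ w', FeasWalk A c S Q s t w' ∧
      r = arcSum d w' + (w'.map ct).sum} := ⟨w, hwW.1, rfl⟩
  have hmem2 : F w ∈ {r : ℝ | ∃ w', FeasWalk A c S Q s t w' ∧
      (∀ v, S v = true → w'.count v ≤ 1) ∧ r = arcSum d w' + (w'.map ct).sum} :=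
    ⟨w, hwW.1, hcount, rfl⟩
  have e1 : sInf {r : ℝ | ∃ w', FeasWalk A c S Q s t w' ∧
      r = arcSum d w' + (w'.map ct).sum} = F w :=
    le_antisymm (csInf_le ⟨F w, hlb1⟩ hmem1) (le_csInf ⟨F w, hmem1⟩ hlb1)
  have e2 : sInf {r : ℝ | ∃ w', FeasWalk A c S Q s t w' ∧
      (∀ v, S v = true → w'.count v ≤ 1) ∧ r = arcSum d w' + (w'.map ct).sum} = F w :=
    le_antisymm (csInf_le ⟨F w, hlb2⟩ hmem2) (le_csInf ⟨F w, hmem2⟩ hlb2)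
  rw [e1, e2]
end

section
/- There exists a directed graph with energy costs and a single charging station such that every feasible s–t walk (battery never negative, full recharge at the station) must visit some transit vertex (a vertex that is neither the source, destination, nor a station) at least twice. -/
theorem List.IsChain.exists_cons_of_getLast?_ne {α : Type*} {R : α → α → Prop} {v t : α}
    {w : List α} (hw : (v :: w).IsChain R) (hlast : (v :: w).getLast? = some t) (hv : v ≠ t) :
    ∃ u rest, w = u :: rest ∧ R v u ∧ (u :: rest).IsChain R ∧ (u :: rest).getLast? = some t := by
  cases w with
  | nil => exact absurd (by simpa using hlast) hv
  | cons u rest =>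
    rw [List.isChain_cons_cons] at hw
    exact ⟨u, rest, rfl, hw.1, hw.2, by rwa [List.getLast?_cons_cons] at hlast⟩

namespace DetourWitness

def arc (i j : Fin 4) : Prop := (i, j) ∈ [(0, 1), (1, 3), (3, 1), (1, 2)]

def cost : Fin 4 → Fin 4 → ℝ :=
  ![![0, 300, 0, 0], ![0, 0, 300, 100], ![0, 0, 0, 0], ![0, 100, 0, 0]]

def station (v : Fin 4) : Bool := v = 3

theorem cost_nonneg (i j : Fin 4) : 0 ≤ cost i j := by
  fin_cases i <;> fin_cases j <;> norm_num [cost]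

theorem arc_zero_iff {j : Fin 4} : arc 0 j ↔ j = 1 := by
  revert j; unfold arc; decide

theorem arc_one_iff {j : Fin 4} : arc 1 j ↔ j = 3 ∨ j = 2 := by
  revert j; unfold arc; decide

theorem arc_three_iff {j : Fin 4} : arc 3 j ↔ j = 1 := by
  revert j; unfold arc; decide

theorem feasWalk_detour : FeasWalk arc cost station 500 0 2 [0, 1, 3, 1, 2] := by
  refine ⟨?_, rfl, rfl, ?_⟩
  · show List.IsChain arc _
    unfold arc
    decide
  · show (0 : ℝ) ≤ 500 - 300 ∧ 0 ≤ 500 - 300 - 100 ∧ 0 ≤ 500 - 100 ∧ 0 ≤ 500 - 100 - 300 ∧ True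
    norm_num

theorem exists_eq_detour_of_feasWalk {w : List (Fin 4)} (hw : FeasWalk arc cost station 500 0 2 w) :
    ∃ rest, w = 0 :: 1 :: 3 :: 1 :: rest := by
  obtain ⟨hchain, hhead, hlast, hfeas⟩ := hw
  obtain ⟨w, rfl⟩ := List.head?_eq_some_iff.1 hhead
  obtain ⟨u, w, rfl, h0u, hchain, hlast⟩ :=
    List.IsChain.exists_cons_of_getLast?_ne hchain hlast (by decide)
  obtain rfl := arc_zero_iff.1 h0u
  obtain ⟨x, w, rfl, h1x, hchain, hlast⟩ := hchain.exists_cons_of_getLast?_ne hlast (by decide)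
  obtain rfl : x = 3 := by
    refine (arc_one_iff.1 h1x).resolve_right ?_
    rintro rfl
    have hbattery : (0 : ℝ) ≤ 500 - 300 - 300 := hfeas.2.1
    norm_num at hbattery
  obtain ⟨y, rest, rfl, h3y, -⟩ := hchain.exists_cons_of_getLast?_ne hlast (by decide)
  obtain rfl := arc_three_iff.1 h3y
  exact ⟨rest, rfl⟩

end DetourWitness

/-- There is an EV instance (with nonnegative costs and a feasible `s`–`t`
walk) in which every feasible `s`–`t` walk visits some transit vertex
(neither source, destination, nor station) at least twice. -/
theorem stmt_5 :
    ∃ (n : ℕ) (A : Fin n → Fin n → Prop) (c : Fin n → Fin n → ℝ)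
      (S : Fin n → Bool) (Q : ℝ) (s t : Fin n),
      (∀ i j, 0 ≤ c i j) ∧
      (∃ w, FeasWalk A c S Q s t w) ∧
      (∀ w, FeasWalk A c S Q s t w →
        ∃ v, S v = false ∧ v ≠ s ∧ v ≠ t ∧ 2 ≤ w.count v) := by
  refine ⟨4, DetourWitness.arc, DetourWitness.cost, DetourWitness.station, 500, 0, 2,
    DetourWitness.cost_nonneg, ⟨_, DetourWitness.feasWalk_detour⟩, fun w hw => ?_⟩
  obtain ⟨rest, rfl⟩ := DetourWitness.exists_eq_detour_of_feasWalk hw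
  exact ⟨1, rfl, by decide, by decide, by simp⟩
end
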